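/- The g-vectors g_{ℓ;w} ∈ ℤⁿ of the cluster variables of the principal-coefficients pattern are uniquely determined by the initial conditions g_{ℓ;∅} = α_ℓ (ℓ = 1,…,n) together with the recurrence relations: g_{ℓ;w·k} = g_{ℓ;w} for ℓ ≠ k, and g_{k;w·k} = −g_{k;w} + ∑_{i=1}^n [b^w_{ik}]₊ · g_{i;w} − ∑_{j=1}^n [b^w_{n+j,k}]₊ · b⁰_j, where b⁰_j = ∑_{i=1}^n b⁰_{ij} α_i denotes the j-th column of B⁰. -/

import Mathlib

/-!
Define `g` by the recurrence; uniqueness is an induction along `w`. That `g` is the family of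
`g`-vectors is an induction along `w` as well: the two monomials of the exchange binomial in
direction `k` have the same degree, i.e. `∑ᵢ b_{ik} g_i = ∑ⱼ b_{n+j,k} b⁰ⱼ`. This identity holds
for `w = ∅`, and mutation in direction `k` transforms the defect linearly (using only
`b_{kk} = 0`, which skew-symmetrizability guarantees at every seed), so it persists. Homogeneity
lets the monomial `x^{g_{k;w}}` be pulled out of the exchange relation for `X`, leaving the
exchange relation for `F(ŷ)` times `x^{g_{k;w·k}}`. Conversely any family of `g`-vectors equals
this one, since `F_{ℓ;w}(ŷ)` is subtraction-free, hence nonzero, and `v ↦ x^v` is injective.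
-/
open scoped BigOperators

noncomputable section

/-- The ambient field `ℚ(x₁,…,xₙ,y₁,…,yₙ)`; the `x`-variables are indexed by
`Sum.inl`, the `y`-variables by `Sum.inr`. -/
abbrev ClusterField (n : ℕ) : Type :=
  FractionRing (MvPolynomial (Fin n ⊕ Fin n) ℚ)

/-- The variable `xᵢ` in the ambient field. -/
def xv (n : ℕ) (i : Fin n) : ClusterField n :=
  algebraMap (MvPolynomial (Fin n ⊕ Fin n) ℚ) (ClusterField n) (MvPolynomial.X (Sum.inl i))

/-- The variable `yⱼ` in the ambient field. -/
def yvF (n : ℕ) (j : Fin n) : ClusterField n :=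
  algebraMap (MvPolynomial (Fin n ⊕ Fin n) ℚ) (ClusterField n) (MvPolynomial.X (Sum.inr j))

/-- The initial `2n × n` extended exchange matrix: top part `B⁰`, bottom part the identity. -/
def initB {n : ℕ} (B0 : Matrix (Fin n) (Fin n) ℤ) :
    Matrix (Fin n ⊕ Fin n) (Fin n) ℤ :=
  Matrix.of fun i j =>
    match i with
    | Sum.inl i' => B0 i' j
    | Sum.inr i' => if i' = j then 1 else 0

/-- Mutation of the `2n × n` extended exchange matrix in direction `k`. -/
def matMut {n : ℕ} (B : Matrix (Fin n ⊕ Fin n) (Fin n) ℤ) (k : Fin n) :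
    Matrix (Fin n ⊕ Fin n) (Fin n) ℤ :=
  Matrix.of fun i j =>
    if i = Sum.inl k ∨ j = k then -B i j
    else B i j + Int.sign (B i k) * max (B i k * B (Sum.inl k) j) 0

/-- One exchange (mutation) step for the cluster variables, with principal coefficients. -/
def Xstep {n : ℕ} (B : Matrix (Fin n ⊕ Fin n) (Fin n) ℤ)
    (X : Fin n → ClusterField n) (k : Fin n) : Fin n → ClusterField n :=
  fun l =>
    if l = k then
      ((∏ j, yvF n j ^ (B (Sum.inr j) k).toNat) * (∏ i, X i ^ (B (Sum.inl i) k).toNat)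
          + (∏ j, yvF n j ^ (-(B (Sum.inr j) k)).toNat) *
              (∏ i, X i ^ (-(B (Sum.inl i) k)).toNat)) / X k
    else X l

/-- The labeled seed (extended matrix together with cluster) attached to the
mutation sequence `w`, for the pattern with principal coefficients. -/
def seed {n : ℕ} (B0 : Matrix (Fin n) (Fin n) ℤ) (w : List (Fin n)) :
    Matrix (Fin n ⊕ Fin n) (Fin n) ℤ × (Fin n → ClusterField n) :=
  w.foldl (fun p k => (matMut p.1 k, Xstep p.1 p.2 k)) (initB B0, fun l => xv n l)

/-- The extended exchange matrix `B̃_w`. -/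
def Bmat {n : ℕ} (B0 : Matrix (Fin n) (Fin n) ℤ) (w : List (Fin n)) :
    Matrix (Fin n ⊕ Fin n) (Fin n) ℤ := (seed B0 w).1

/-- The cluster variable `X_{ℓ;w}`. -/
def Xvar {n : ℕ} (B0 : Matrix (Fin n) (Fin n) ℤ) (w : List (Fin n)) :
    Fin n → ClusterField n := (seed B0 w).2

/-- The field `ℚ(y₁,…,yₙ)`. -/
abbrev YField (n : ℕ) : Type := FractionRing (MvPolynomial (Fin n) ℚ)

/-- The variable `yⱼ` in `ℚ(y₁,…,yₙ)`. -/
def yv (n : ℕ) (j : Fin n) : YField n :=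
  algebraMap (MvPolynomial (Fin n) ℚ) (YField n) (MvPolynomial.X j)

/-- The exchange step at `x₁ = ⋯ = xₙ = 1`: the recursion for the `F`-polynomials. -/
def Fstep {n : ℕ} (B : Matrix (Fin n ⊕ Fin n) (Fin n) ℤ)
    (F : Fin n → YField n) (k : Fin n) : Fin n → YField n :=
  fun l =>
    if l = k then
      ((∏ j, yv n j ^ (B (Sum.inr j) k).toNat) * (∏ i, F i ^ (B (Sum.inl i) k).toNat)
          + (∏ j, yv n j ^ (-(B (Sum.inr j) k)).toNat) *
              (∏ i, F i ^ (-(B (Sum.inl i) k)).toNat)) / F k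
    else F l

/-- The seed of the pattern specialized at `x₁ = ⋯ = xₙ = 1`. -/
def Fseed {n : ℕ} (B0 : Matrix (Fin n) (Fin n) ℤ) (w : List (Fin n)) :
    Matrix (Fin n ⊕ Fin n) (Fin n) ℤ × (Fin n → YField n) :=
  w.foldl (fun p k => (matMut p.1 k, Fstep p.1 p.2 k)) (initB B0, fun _ => 1)

/-- The `F`-polynomial `F_{ℓ;w}`, i.e. the image of `X_{ℓ;w}` under the
specialization `x₁ = ⋯ = xₙ = 1`. -/
def Fpoly {n : ℕ} (B0 : Matrix (Fin n) (Fin n) ℤ) (w : List (Fin n)) :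
    Fin n → YField n := (Fseed B0 w).2


/-- The element `ŷ_j = y_j ∏ᵢ x_i^{b⁰_{ij}}` of the ambient field. -/
def yhat {n : ℕ} (B0 : Matrix (Fin n) (Fin n) ℤ) (j : Fin n) : ClusterField n :=
  yvF n j * ∏ i, xv n i ^ (B0 i j)

/-- One step of the recursion computing the evaluations `F_{ℓ;w}(ŷ₁,…,ŷₙ)`:
the `F`-polynomial recursion with `yⱼ` replaced by `ŷⱼ`. -/
def FhatStep {n : ℕ} (B0 : Matrix (Fin n) (Fin n) ℤ)
    (B : Matrix (Fin n ⊕ Fin n) (Fin n) ℤ)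
    (F : Fin n → ClusterField n) (k : Fin n) : Fin n → ClusterField n :=
  fun l =>
    if l = k then
      ((∏ j, yhat B0 j ^ (B (Sum.inr j) k).toNat) * (∏ i, F i ^ (B (Sum.inl i) k).toNat)
          + (∏ j, yhat B0 j ^ (-(B (Sum.inr j) k)).toNat) *
              (∏ i, F i ^ (-(B (Sum.inl i) k)).toNat)) / F k
    else F l

/-- The evaluation `F_{ℓ;w}(ŷ₁,…,ŷₙ) ∈ ℚ(x₁,…,xₙ,y₁,…,yₙ)` of the
`F`-polynomial at `ŷ₁,…,ŷₙ`. -/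
def Fhat {n : ℕ} (B0 : Matrix (Fin n) (Fin n) ℤ) (w : List (Fin n)) :
    Fin n → ClusterField n :=
  (w.foldl (fun p k => (matMut p.1 k, FhatStep B0 p.1 p.2 k))
    (initB B0, fun _ => 1)).2

/-- `g` is the family of `g`-vectors of the principal-coefficients pattern:
`g w ℓ` is the (unique) vector with `X_{ℓ;w} = x^{g w ℓ} · F_{ℓ;w}(ŷ)`. -/
def IsGVectorFamily {n : ℕ} (B0 : Matrix (Fin n) (Fin n) ℤ)
    (g : List (Fin n) → Fin n → Fin n → ℤ) : Prop :=
  ∀ (w : List (Fin n)) (l : Fin n),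
    Xvar B0 w l = (∏ i, xv n i ^ g w l i) * Fhat B0 w l

/-- The initial conditions and recurrence relations for the `g`-vectors:
`g_{ℓ;∅} = α_ℓ`, `g_{ℓ;w·k} = g_{ℓ;w}` for `ℓ ≠ k`, and
`g_{k;w·k} = −g_{k;w} + ∑ᵢ [b^w_{ik}]₊ g_{i;w} − ∑ⱼ [b^w_{n+j,k}]₊ b⁰ⱼ`. -/
def SatisfiesGRecurrence {n : ℕ} (B0 : Matrix (Fin n) (Fin n) ℤ)
    (g : List (Fin n) → Fin n → Fin n → ℤ) : Prop :=
  (∀ l i : Fin n, g [] l i = if i = l then 1 else 0) ∧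
  (∀ (w : List (Fin n)) (k l : Fin n), l ≠ k → g (w ++ [k]) l = g w l) ∧
  (∀ (w : List (Fin n)) (k i : Fin n),
    g (w ++ [k]) k i =
      -g w k i + (∑ i', max (Bmat B0 w (Sum.inl i') k) 0 * g w i' i)
        - ∑ j, max (Bmat B0 w (Sum.inr j) k) 0 * B0 i j)

theorem Int.sign_mul_max_mul_zero (a c : ℤ) :
    a.sign * max (a * c) 0 = max a 0 * c + a * max (-c) 0 := by
  rcases lt_trichotomy a 0 with ha | rfl | ha
  · rcases le_total c 0 with hc | hc
    · simp [Int.sign_eq_neg_one_of_neg ha, ha.le, hc, mul_nonneg_of_nonpos_of_nonpos ha.le hc]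
    · simp [Int.sign_eq_neg_one_of_neg ha, ha.le, hc, mul_nonpos_of_nonpos_of_nonneg ha.le hc]
  · simp
  · rcases le_total c 0 with hc | hc
    · simp [Int.sign_eq_one_of_pos ha, ha.le, hc, mul_nonpos_of_nonneg_of_nonpos ha.le hc]
    · simp [Int.sign_eq_one_of_pos ha, ha.le, hc, mul_nonneg ha.le hc]

variable {n : ℕ}

section MatrixMutation

variable (B : Matrix (Fin n ⊕ Fin n) (Fin n) ℤ) (k : Fin n)

theorem matMut_apply_self_col (r : Fin n ⊕ Fin n) : matMut B k r k = -B r k := by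
  simp [matMut]

theorem matMut_apply_self_row (j : Fin n) : matMut B k (.inl k) j = -B (.inl k) j := by
  simp [matMut]

theorem matMut_apply_of_ne {r : Fin n ⊕ Fin n} {j : Fin n} (hr : r ≠ .inl k) (hj : j ≠ k) :
    matMut B k r j =
      B r j + max (B r k) 0 * B (.inl k) j + B r k * max (-B (.inl k) j) 0 := by
  simp [matMut, hr, hj, Int.sign_mul_max_mul_zero, add_assoc]

end MatrixMutation

def IsSkewSymmetrizableTop (d : Fin n → ℤ) (B : Matrix (Fin n ⊕ Fin n) (Fin n) ℤ) : Prop :=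
  ∀ i j, d i * B (.inl i) j = -(d j * B (.inl j) i)

namespace IsSkewSymmetrizableTop

variable {d : Fin n → ℤ} {B : Matrix (Fin n ⊕ Fin n) (Fin n) ℤ}

theorem apply_self_eq_zero (hd : ∀ i, 0 < d i) (h : IsSkewSymmetrizableTop d B) (k : Fin n) :
    B (.inl k) k = 0 := by
  have := h k k
  have := hd k
  nlinarith

theorem matMut (hd : ∀ i, 0 < d i) (h : IsSkewSymmetrizableTop d B) (k : Fin n) :
    IsSkewSymmetrizableTop d (matMut B k) := by
  intro i j
  by_cases hik : i = k
  · subst hik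
    rw [matMut_apply_self_row, matMut_apply_self_col]
    linear_combination -h i j
  by_cases hjk : j = k
  · subst hjk
    rw [matMut_apply_self_col, matMut_apply_self_row]
    linear_combination -h i j
  rw [matMut_apply_of_ne _ _ (by simpa using hik) hjk,
    matMut_apply_of_ne _ _ (by simpa using hjk) hik]
  -- the correction terms of the two entries cancel in pairs
  have hpos : ∀ a, d a * max (B (.inl a) k) 0 = d k * max (-B (.inl k) a) 0 := fun a => by
    rw [mul_max_of_nonneg _ _ (hd a).le, mul_max_of_nonneg _ _ (hd k).le, h, mul_neg,
      mul_zero, mul_zero]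
  linear_combination h i j + B (.inl k) j * hpos i + max (-B (.inl k) j) 0 * h i k
    + B (.inl k) i * hpos j + max (-B (.inl k) i) 0 * h j k

end IsSkewSymmetrizableTop

section Folds

theorem foldl_matMut_fst {γ : Type*} (step : Matrix (Fin n ⊕ Fin n) (Fin n) ℤ → γ → Fin n → γ)
    (w : List (Fin n)) (B : Matrix (Fin n ⊕ Fin n) (Fin n) ℤ) (c : γ) :
    (w.foldl (fun p k => (matMut p.1 k, step p.1 p.2 k)) (B, c)).1 = w.foldl matMut B := by
  induction w generalizing B c with
  | nil => rfl
  | cons k w ih => exact ih _ _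

theorem foldl_matMut_append {γ : Type*}
    (step : Matrix (Fin n ⊕ Fin n) (Fin n) ℤ → γ → Fin n → γ)
    (w : List (Fin n)) (k : Fin n) (B : Matrix (Fin n ⊕ Fin n) (Fin n) ℤ) (c : γ) :
    (w ++ [k]).foldl (fun p k => (matMut p.1 k, step p.1 p.2 k)) (B, c) =
      (matMut (w.foldl matMut B) k,
        step (w.foldl matMut B) (w.foldl (fun p k => (matMut p.1 k, step p.1 p.2 k)) (B, c)).2 k) := by
  rw [List.foldl_append, ← foldl_matMut_fst step w B c]
  rfl

variable (B0 : Matrix (Fin n) (Fin n) ℤ) (w : List (Fin n)) (k : Fin n)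

theorem Bmat_eq_foldl : Bmat B0 w = w.foldl matMut (initB B0) :=
  foldl_matMut_fst _ w _ _

theorem Bmat_append : Bmat B0 (w ++ [k]) = matMut (Bmat B0 w) k := by
  rw [Bmat, seed, foldl_matMut_append, ← Bmat_eq_foldl]

theorem Xvar_append : Xvar B0 (w ++ [k]) = Xstep (Bmat B0 w) (Xvar B0 w) k := by
  rw [Xvar, seed, foldl_matMut_append, ← Bmat_eq_foldl]
  rfl

theorem Fhat_append : Fhat B0 (w ++ [k]) = FhatStep B0 (Bmat B0 w) (Fhat B0 w) k := by
  rw [Fhat, foldl_matMut_append, ← Bmat_eq_foldl]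
  rfl

end Folds

section GVectorMutation

variable {V : Type*} [AddCommGroup V] (β : Fin n → V) (B : Matrix (Fin n ⊕ Fin n) (Fin n) ℤ)

def gMut (G : Fin n → V) (k : Fin n) : Fin n → V :=
  Function.update G k
    (-G k + ∑ i, max (B (.inl i) k) 0 • G i - ∑ j, max (B (.inr j) k) 0 • β j)

/-- With `deg xᵢ = αᵢ`, `deg Xᵢ = G i` and `deg yⱼ = -β j`, this is the degree of the ratio
of the two monomials of the exchange binomial in direction `m`. -/
def exchangeDegree (G : Fin n → V) (m : Fin n) : V :=
  ∑ i, B (.inl i) m • G i - ∑ j, B (.inr j) m • β j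

variable (G : Fin n → V) (k : Fin n)

theorem gMut_self :
    gMut β B G k k =
      -G k + ∑ i, max (B (.inl i) k) 0 • G i - ∑ j, max (B (.inr j) k) 0 • β j :=
  Function.update_self _ _ _

theorem gMut_self_of_exchangeDegree_eq_zero (h : exchangeDegree β B G k = 0) :
    gMut β B G k k =
      -G k + ∑ i, max (-B (.inl i) k) 0 • G i - ∑ j, max (-B (.inr j) k) 0 • β j := by
  have hsplit : ∀ {ι : Type} [Fintype ι] (b : ι → ℤ) (v : ι → V),
      ∑ i, b i • v i = ∑ i, max (b i) 0 • v i - ∑ i, max (-b i) 0 • v i := fun b v => by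
    simp only [← Finset.sum_sub_distrib, ← sub_smul, max_zero_sub_eq_self]
  rw [exchangeDegree, hsplit (fun i => B (.inl i) k), hsplit (fun j => B (.inr j) k)] at h
  rw [gMut_self]
  linear_combination (norm := module) h

variable {B} {k}

theorem exchangeDegree_matMut_gMut_self (hkk : B (.inl k) k = 0) :
    exchangeDegree β (matMut B k) (gMut β B G k) k = -exchangeDegree β B G k := by
  have hterm : ∀ i, matMut B k (.inl i) k • gMut β B G k i = -(B (.inl i) k • G i) := by
    intro i
    rw [matMut_apply_self_col]
    rcases eq_or_ne i k with rfl | hik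
    · simp [hkk]
    · simp [gMut, hik]
  rw [exchangeDegree, exchangeDegree, Finset.sum_congr rfl fun i _ => hterm i]
  simp only [matMut_apply_self_col, neg_smul, Finset.sum_neg_distrib]
  abel

theorem exchangeDegree_matMut_gMut_of_ne (hkk : B (.inl k) k = 0) {m : Fin n} (hmk : m ≠ k) :
    exchangeDegree β (matMut B k) (gMut β B G k) m =
      exchangeDegree β B G m + max (-B (.inl k) m) 0 • exchangeDegree β B G k := by
  set P := ∑ i, max (B (.inl i) k) 0 • G i
  set Q := ∑ j, max (B (.inr j) k) 0 • β j
  have hx : ∀ i, matMut B k (.inl i) m • gMut β B G k i =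
      B (.inl i) m • G i + B (.inl k) m • (max (B (.inl i) k) 0 • G i)
        + max (-B (.inl k) m) 0 • (B (.inl i) k • G i)
        + if i = k then -B (.inl k) m • (P - Q) else 0 := by
    intro i
    rcases eq_or_ne i k with rfl | hik
    · simp only [matMut_apply_self_row, gMut, Function.update_self, hkk, max_self, zero_smul,
        smul_zero, if_true]
      module
    · rw [matMut_apply_of_ne _ _ (by simpa using hik) hmk]
      simp only [gMut, Function.update_of_ne hik, if_neg hik]
      module
  have hy : ∀ j, matMut B k (.inr j) m • β j =
      B (.inr j) m • β j + B (.inl k) m • (max (B (.inr j) k) 0 • β j)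
        + max (-B (.inl k) m) 0 • (B (.inr j) k • β j) := by
    intro j
    rw [matMut_apply_of_ne _ _ (by simp) hmk]
    module
  simp only [exchangeDegree, hx, hy, Finset.sum_add_distrib, ← Finset.smul_sum,
    Finset.sum_ite_eq', Finset.mem_univ, if_true]
  module

end GVectorMutation

section GVectors

variable (B0 : Matrix (Fin n) (Fin n) ℤ)

theorem isSkewSymmetrizableTop_Bmat {d : Fin n → ℤ} (hd : ∀ i, 0 < d i)
    (hskew : ∀ i j, d i * B0 i j = -(d j * B0 j i)) (w : List (Fin n)) :
    IsSkewSymmetrizableTop d (Bmat B0 w) := by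
  induction w using List.reverseRecOn with
  | nil => exact hskew
  | append_singleton w k ih => rw [Bmat_append]; exact ih.matMut hd k

def gvec (w : List (Fin n)) : Fin n → Fin n → ℤ :=
  (w.foldl (fun p k => (matMut p.1 k, gMut (fun j i => B0 i j) p.1 p.2 k))
    (initB B0, fun l i => if i = l then 1 else 0)).2

theorem gvec_append (w : List (Fin n)) (k : Fin n) :
    gvec B0 (w ++ [k]) = gMut (fun j i => B0 i j) (Bmat B0 w) (gvec B0 w) k := by
  rw [gvec, foldl_matMut_append, ← Bmat_eq_foldl]
  rfl

theorem satisfiesGRecurrence_gvec : SatisfiesGRecurrence B0 (gvec B0) := by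
  refine ⟨fun l i => rfl, fun w k l hlk => ?_, fun w k i => ?_⟩
  · rw [gvec_append, gMut, Function.update_of_ne hlk]
  · simp [gvec_append, gMut, Finset.sum_apply]

theorem SatisfiesGRecurrence.unique {g₁ g₂ : List (Fin n) → Fin n → Fin n → ℤ}
    (h₁ : SatisfiesGRecurrence B0 g₁) (h₂ : SatisfiesGRecurrence B0 g₂) : g₁ = g₂ := by
  funext w
  induction w using List.reverseRecOn with
  | nil => funext l i; rw [h₁.1, h₂.1]
  | append_singleton w k ih =>
    funext l i
    rcases eq_or_ne l k with rfl | hlk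
    · rw [h₁.2.2, h₂.2.2, ih]
    · rw [h₁.2.1 w k l hlk, h₂.2.1 w k l hlk, ih]

theorem exchangeDegree_gvec {d : Fin n → ℤ} (hd : ∀ i, 0 < d i)
    (hskew : ∀ i j, d i * B0 i j = -(d j * B0 j i)) (w : List (Fin n)) (m : Fin n) :
    exchangeDegree (fun j i => B0 i j) (Bmat B0 w) (gvec B0 w) m = 0 := by
  induction w using List.reverseRecOn generalizing m with
  | nil =>
    funext r
    simp [exchangeDegree, Bmat, seed, gvec, initB, Finset.sum_apply]
  | append_singleton w k ih =>
    have hkk := (isSkewSymmetrizableTop_Bmat B0 hd hskew w).apply_self_eq_zero hd k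
    rw [Bmat_append, gvec_append]
    rcases eq_or_ne m k with rfl | hmk
    · rw [exchangeDegree_matMut_gMut_self _ _ hkk, ih, neg_zero]
    · rw [exchangeDegree_matMut_gMut_of_ne _ _ hkk hmk, ih, ih, smul_zero, add_zero]

end GVectors

section LaurentMonomials

open MvPolynomial

variable {σ R : Type*} [Fintype σ] [CommRing R]

theorem MvPolynomial.prod_X_pow_eq_monomial_equivFunOnFinite (a : σ → ℕ) :
    ∏ s, (X s : MvPolynomial σ R) ^ a s = monomial (Finsupp.equivFunOnFinite.symm a) 1 := by
  rw [monomial_eq, C_1, one_mul, Finsupp.prod_fintype _ _ (fun _ => pow_zero _)]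
  rfl

theorem MvPolynomial.prod_algebraMap_X_zpow_injective [IsDomain R] :
    Function.Injective fun v : σ → ℤ =>
      ∏ s, algebraMap (MvPolynomial σ R) (FractionRing (MvPolynomial σ R)) (X s) ^ v s := by
  let ι := algebraMap (MvPolynomial σ R) (FractionRing (MvPolynomial σ R))
  have hι : Function.Injective ι := IsFractionRing.injective _ _
  let mon (a : σ → ℕ) : MvPolynomial σ R := monomial (Finsupp.equivFunOnFinite.symm a) 1
  have hmon : ∀ a, mon a ≠ 0 := fun a => monomial_eq_zero.not.2 one_ne_zero
  have hsplit : ∀ v : σ → ℤ,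
      ∏ s, ι (X s) ^ v s = ι (mon fun s => (v s).toNat) / ι (mon fun s => (-v s).toNat) := by
    intro v
    simp only [mon, ← prod_X_pow_eq_monomial_equivFunOnFinite, map_prod, map_pow,
      ← Finset.prod_div_distrib]
    refine Finset.prod_congr rfl fun s _ => ?_
    have hX : ι (X s) ≠ 0 := (map_ne_zero_iff _ hι).2 (X_ne_zero s)
    rw [← zpow_natCast, ← zpow_natCast, ← zpow_sub₀ hX, Int.toNat_sub_toNat_neg]
  intro v w h
  replace h := (hsplit v).symm.trans (h.trans (hsplit w))
  rw [div_eq_div_iff ((map_ne_zero_iff _ hι).2 (hmon _)) ((map_ne_zero_iff _ hι).2 (hmon _)),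
    ← map_mul, ← map_mul, hι.eq_iff, monomial_mul, monomial_mul, mul_one,
    monomial_left_inj one_ne_zero] at h
  funext s
  have hs := DFunLike.congr_fun h s
  simp only [Finsupp.coe_add, Pi.add_apply, Finsupp.coe_equivFunOnFinite_symm] at hs
  omega

end LaurentMonomials

section ClusterMonomials

def xPow (v : Fin n → ℤ) : ClusterField n := ∏ i, xv n i ^ v i

theorem xv_ne_zero (i : Fin n) : xv n i ≠ 0 :=
  (map_ne_zero_iff _ (IsFractionRing.injective _ _)).2 (MvPolynomial.X_ne_zero _)

theorem xPow_ne_zero (v : Fin n → ℤ) : xPow v ≠ 0 :=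
  Finset.prod_ne_zero_iff.2 fun i _ => zpow_ne_zero _ (xv_ne_zero i)

theorem xPow_add (v w : Fin n → ℤ) : xPow (v + w) = xPow v * xPow w := by
  simp only [xPow, Pi.add_apply, zpow_add₀ (xv_ne_zero _), Finset.prod_mul_distrib]

theorem xPow_zero : xPow (0 : Fin n → ℤ) = 1 := by simp [xPow]

theorem xPow_sum {ι : Type*} (s : Finset ι) (v : ι → Fin n → ℤ) :
    xPow (∑ i ∈ s, v i) = ∏ i ∈ s, xPow (v i) := by
  induction s using Finset.cons_induction with
  | empty => exact xPow_zero
  | cons a s ha ih => rw [Finset.sum_cons, Finset.prod_cons, xPow_add, ih]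

theorem xPow_natCast_smul (p : ℕ) (v : Fin n → ℤ) : xPow ((p : ℤ) • v) = xPow v ^ p := by
  simp only [xPow, Pi.smul_apply, smul_eq_mul, mul_comm (p : ℤ), zpow_mul, zpow_natCast,
    Finset.prod_pow]

theorem xPow_injective : Function.Injective (xPow (n := n)) := by
  intro v w h
  have key : ∀ v : Fin n → ℤ, xPow v = ∏ s, algebraMap (MvPolynomial (Fin n ⊕ Fin n) ℚ)
      (ClusterField n) (MvPolynomial.X s) ^ Sum.elim v 0 s := fun v => by
    simp [xPow, xv, Fintype.prod_sum_type]
  rw [key, key] at h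
  funext i
  exact congr_fun (MvPolynomial.prod_algebraMap_X_zpow_injective h) (.inl i)

theorem prod_xPow_mul_pow (G : Fin n → Fin n → ℤ) (F : Fin n → ClusterField n) (p : Fin n → ℕ) :
    ∏ i, (xPow (G i) * F i) ^ p i = xPow (∑ i, (p i : ℤ) • G i) * ∏ i, F i ^ p i := by
  simp only [mul_pow, Finset.prod_mul_distrib, xPow_sum, xPow_natCast_smul]

theorem yhat_eq_xPow_mul (B0 : Matrix (Fin n) (Fin n) ℤ) (j : Fin n) :
    yhat B0 j = xPow (fun i => B0 i j) * yvF n j :=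
  mul_comm _ _

end ClusterMonomials

section GVectorFamily

variable (B0 : Matrix (Fin n) (Fin n) ℤ)

theorem Xstep_self_eq (B : Matrix (Fin n ⊕ Fin n) (Fin n) ℤ)
    {G : Fin n → Fin n → ℤ} {X F : Fin n → ClusterField n} {k : Fin n}
    (hX : ∀ i, X i = xPow (G i) * F i)
    (hdeg : exchangeDegree (fun j i => B0 i j) B G k = 0) :
    Xstep B X k k = xPow (gMut (fun j i => B0 i j) B G k k) * FhatStep B0 B F k k := by
  have hpos : ∑ i, ((B (.inl i) k).toNat : ℤ) • G i = gMut (fun j i => B0 i j) B G k k + G k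
      + ∑ j, ((B (.inr j) k).toNat : ℤ) • fun i => B0 i j := by
    simp only [Int.toNat_eq_max, gMut_self]
    abel
  have hneg : ∑ i, ((-B (.inl i) k).toNat : ℤ) • G i = gMut (fun j i => B0 i j) B G k k + G k
      + ∑ j, ((-B (.inr j) k).toNat : ℤ) • fun i => B0 i j := by
    simp only [Int.toNat_eq_max, gMut_self_of_exchangeDegree_eq_zero _ _ _ _ hdeg]
    abel
  simp only [Xstep, FhatStep, ↓reduceIte, hX, yhat_eq_xPow_mul, prod_xPow_mul_pow, hpos, hneg,
    xPow_add]
  field_simp [xPow_ne_zero]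

theorem isGVectorFamily_gvec {d : Fin n → ℤ} (hd : ∀ i, 0 < d i)
    (hskew : ∀ i j, d i * B0 i j = -(d j * B0 j i)) : IsGVectorFamily B0 (gvec B0) := by
  intro w
  induction w using List.reverseRecOn with
  | nil =>
    intro l
    simp [Xvar, seed, Fhat, gvec, Finset.prod_ite_eq']
  | append_singleton w k ih =>
    intro l
    rw [Xvar_append, Fhat_append, gvec_append]
    rcases eq_or_ne l k with rfl | hlk
    · exact Xstep_self_eq B0 _ ih (exchangeDegree_gvec B0 hd hskew w l)
    · simpa [Xstep, FhatStep, gMut, hlk] using ih l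

end GVectorFamily

section PositiveQuotients

variable {R K 𝕜 : Type*} [CommRing R] [Field K] [Algebra R K] [CommRing 𝕜] [LinearOrder 𝕜]
  {φ : R →+* 𝕜}

variable (K) in
/-- With `φ` the evaluation at `xᵢ = yⱼ = 1`, every subtraction-free rational expression in the
variables is a positive quotient. -/
def IsPositiveQuotient (φ : R →+* 𝕜) (f : K) : Prop :=
  ∃ p q : R, 0 < φ p ∧ 0 < φ q ∧ f = algebraMap R K p / algebraMap R K q

namespace IsPositiveQuotient

theorem ne_zero [IsFractionRing R K] {f : K} (hf : IsPositiveQuotient K φ f) : f ≠ 0 := by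
  obtain ⟨p, q, hp, hq, rfl⟩ := hf
  have hinj := IsFractionRing.injective R K
  refine div_ne_zero ?_ ?_ <;> refine (map_ne_zero_iff _ hinj).2 fun h => ?_
  · simp [h] at hp
  · simp [h] at hq

theorem inv {f : K} (hf : IsPositiveQuotient K φ f) : IsPositiveQuotient K φ f⁻¹ := by
  obtain ⟨p, q, hp, hq, rfl⟩ := hf
  exact ⟨q, p, hq, hp, inv_div _ _⟩

variable [IsStrictOrderedRing 𝕜]

theorem algebraMap_of_pos {p : R} (hp : 0 < φ p) : IsPositiveQuotient K φ (algebraMap R K p) :=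
  ⟨p, 1, hp, by simp, by simp⟩

theorem one : IsPositiveQuotient K φ 1 := by
  simpa using algebraMap_of_pos (K := K) (φ := φ) (p := 1) (by simp)

theorem mul {f g : K} (hf : IsPositiveQuotient K φ f) (hg : IsPositiveQuotient K φ g) :
    IsPositiveQuotient K φ (f * g) := by
  obtain ⟨p, q, hp, hq, rfl⟩ := hf
  obtain ⟨p', q', hp', hq', rfl⟩ := hg
  exact ⟨p * p', q * q', by simpa using mul_pos hp hp', by simpa using mul_pos hq hq',
    by simp [div_mul_div_comm]⟩

theorem div {f g : K} (hf : IsPositiveQuotient K φ f) (hg : IsPositiveQuotient K φ g) :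
    IsPositiveQuotient K φ (f / g) :=
  div_eq_mul_inv f g ▸ hf.mul hg.inv

theorem add [IsFractionRing R K] {f g : K} (hf : IsPositiveQuotient K φ f)
    (hg : IsPositiveQuotient K φ g) : IsPositiveQuotient K φ (f + g) := by
  obtain ⟨p, q, hp, hq, rfl⟩ := hf
  obtain ⟨p', q', hp', hq', rfl⟩ := hg
  have hq₀ : IsPositiveQuotient K φ (algebraMap R K q) := algebraMap_of_pos hq
  have hq₀' : IsPositiveQuotient K φ (algebraMap R K q') := algebraMap_of_pos hq'
  refine ⟨p * q' + q * p', q * q', ?_, by simpa using mul_pos hq hq', ?_⟩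
  · simpa using add_pos (mul_pos hp hq') (mul_pos hq hp')
  · rw [div_add_div _ _ hq₀.ne_zero hq₀'.ne_zero]
    simp

theorem pow {f : K} (hf : IsPositiveQuotient K φ f) (m : ℕ) : IsPositiveQuotient K φ (f ^ m) := by
  induction m with
  | zero => simpa using one
  | succ m ih => rw [pow_succ]; exact ih.mul hf

theorem zpow {f : K} (hf : IsPositiveQuotient K φ f) (m : ℤ) : IsPositiveQuotient K φ (f ^ m) := by
  cases m with
  | ofNat m => simpa using hf.pow m
  | negSucc m => simpa using (hf.pow (m + 1)).inv

theorem prod {ι : Type*} {s : Finset ι} {f : ι → K} (hf : ∀ i ∈ s, IsPositiveQuotient K φ (f i)) :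
    IsPositiveQuotient K φ (∏ i ∈ s, f i) := by
  induction s using Finset.cons_induction with
  | empty => simpa using one
  | cons a s ha ih =>
    rw [Finset.prod_cons]
    exact (hf a (Finset.mem_cons_self a s)).mul (ih fun i hi => hf i (Finset.mem_cons_of_mem hi))

end IsPositiveQuotient

end PositiveQuotients

section FhatNonvanishing

abbrev evalAtOne (n : ℕ) : MvPolynomial (Fin n ⊕ Fin n) ℚ →+* ℚ :=
  MvPolynomial.eval fun _ => 1

theorem isPositiveQuotient_algebraMap_X (s : Fin n ⊕ Fin n) :
    IsPositiveQuotient (ClusterField n) (evalAtOne n)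
      (algebraMap (MvPolynomial (Fin n ⊕ Fin n) ℚ) (ClusterField n) (MvPolynomial.X s)) :=
  .algebraMap_of_pos (by simp)

theorem isPositiveQuotient_Fhat (B0 : Matrix (Fin n) (Fin n) ℤ) (w : List (Fin n)) (l : Fin n) :
    IsPositiveQuotient (ClusterField n) (evalAtOne n) (Fhat B0 w l) := by
  have hyhat : ∀ j, IsPositiveQuotient _ (evalAtOne n) (yhat B0 j) :=
    fun j => (isPositiveQuotient_algebraMap_X _).mul
      (.prod fun i _ => (isPositiveQuotient_algebraMap_X _).zpow _)
  induction w using List.reverseRecOn generalizing l with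
  | nil => exact .one
  | append_singleton w k ih =>
    rw [Fhat_append, FhatStep]
    split_ifs with hlk
    · subst hlk
      have hterm : ∀ a b : Fin n → ℕ, IsPositiveQuotient _ (evalAtOne n)
          ((∏ j, yhat B0 j ^ a j) * ∏ i, Fhat B0 w i ^ b i) := fun a b =>
        (IsPositiveQuotient.prod fun j _ => (hyhat j).pow _).mul (.prod fun i _ => (ih i).pow _)
      exact ((hterm _ _).add (hterm _ _)).div (ih l)
    · exact ih l

end FhatNonvanishing

theorem IsGVectorFamily.unique {B0 : Matrix (Fin n) (Fin n) ℤ}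
    {g₁ g₂ : List (Fin n) → Fin n → Fin n → ℤ}
    (h₁ : IsGVectorFamily B0 g₁) (h₂ : IsGVectorFamily B0 g₂) : g₁ = g₂ := by
  funext w l
  refine xPow_injective (mul_right_cancel₀ (isPositiveQuotient_Fhat B0 w l).ne_zero ?_)
  exact (h₁ w l).symm.trans (h₂ w l)

theorem gVector_recurrence_general (n : ℕ)
    (B0 : Matrix (Fin n) (Fin n) ℤ)
    (d : Fin n → ℤ) (hd : ∀ i, 0 < d i)
    (hskew : ∀ i j, d i * B0 i j = -(d j * B0 j i)) :
    (∀ g : List (Fin n) → Fin n → Fin n → ℤ,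
        IsGVectorFamily B0 g → SatisfiesGRecurrence B0 g) ∧
    (∀ g₁ g₂ : List (Fin n) → Fin n → Fin n → ℤ,
        SatisfiesGRecurrence B0 g₁ → SatisfiesGRecurrence B0 g₂ → g₁ = g₂) := by
  refine ⟨fun g hg => ?_, fun g₁ g₂ h₁ h₂ => SatisfiesGRecurrence.unique B0 h₁ h₂⟩
  rw [hg.unique (isGVectorFamily_gvec B0 hd hskew)]
  exact satisfiesGRecurrence_gvec B0

/-- The `g`-vectors satisfy the initial conditions and the
recurrences, and they are uniquely determined by them. -/
theorem gVector_recurrence (n : ℕ) (hn : 1 ≤ n)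
    (B0 : Matrix (Fin n) (Fin n) ℤ)
    (d : Fin n → ℤ) (hd : ∀ i, 0 < d i)
    (hskew : ∀ i j, d i * B0 i j = -(d j * B0 j i)) :
    (∀ g : List (Fin n) → Fin n → Fin n → ℤ,
        IsGVectorFamily B0 g → SatisfiesGRecurrence B0 g) ∧
    (∀ g₁ g₂ : List (Fin n) → Fin n → Fin n → ℤ,
        SatisfiesGRecurrence B0 g₁ → SatisfiesGRecurrence B0 g₂ → g₁ = g₂) :=
  gVector_recurrence_general n B0 d hd hskew

end
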